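/- arXiv:0906.5388 — 6 statements merged into one kernel-verified Lean document; each statement's English description precedes it below -/
import Mathlib

section
/- For every integer $k \geq 1$ one has $p(W_{k+1}) = \sum_{j=0}^{k} \frac{(-1)^j B_j}{j!}\,\ell^j\, p(t_{k+1-j}) \; - \; \frac{1}{k!}\,\ell^k$ in $S$. (This is the algebraic core of Proposition 1.1: $\mathrm{ch}_k(H_x) = \sum_{j=0}^{k} \frac{(-1)^j B_j}{j!} c_1(L_x)^j\, {\pi_x}_*\mathrm{ev}_x^*(\mathrm{ch}_{k+1-j}(X)) - \frac{1}{k!} c_1(L_x)^k$.) -/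
/-!
Since `σ (σ + L) = 0`, powers of `c = σ + (σ + L)` split as
`c ^ j = L ^ j + (1 - (-1) ^ j) σ ^ j`; moreover `σ c = σ²`, and `c` acts as `L` on everything
killed by `σ`. Hence
`Z m = t m - c ^ m / m! + ((n (-1) ^ m + 1) / m!) σ ^ m` for `m ≥ 1`, and, using
`p (σ ^ (i + 1)) = (-ℓ) ^ i`, each summand of `W (k + 1)` pushes forward to
`ℓ ^ j p (t (k + 1 - j))` plus a rational multiple of `(-ℓ) ^ k`. The Bernoulli recurrences
`∑ C(N, j) B_j = 0` (`N ≥ 2`) and `∑ C(N, j) B'_j = N` add these multiples up to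
`-(-1) ^ k / k!`. The summand `j = k + 1` vanishes: `B_{k+1} = 0` for even `k`, and
`p (c ^ (k + 1)) = 0` for odd `k`.
-/

open Finset
open scoped Nat

theorem mul_pow_eq_mul_pow_of_mul_eq {M : Type*} [CommMonoid M] {x a b : M} (h : x * a = x * b)
    (j : ℕ) : x * a ^ j = x * b ^ j := by
  induction j with
  | zero => simp
  | succ j ih =>
    calc x * a ^ (j + 1) = x * a ^ j * a := by rw [pow_succ, mul_assoc]
      _ = x * a * b ^ j := by rw [ih, mul_right_comm]
      _ = x * b ^ (j + 1) := by rw [h, pow_succ, mul_right_comm, mul_assoc]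

theorem add_pow_succ_of_mul_eq_zero {R : Type*} [CommRing R] {e f : R} (h : e * f = 0) (j : ℕ) :
    (e + f) ^ (j + 1) = e ^ (j + 1) + f ^ (j + 1) := by
  induction j with
  | zero => simp
  | succ j ih => linear_combination (e + f) * ih + (e ^ j + f ^ j) * h

theorem two_mul_add_pow_of_sq_eq {R : Type*} [CommRing R] {σ L : R} (hσ : σ ^ 2 = -(σ * L))
    (j : ℕ) :
    (2 * σ + L) ^ j = L ^ j + (1 - (-1) ^ j) * σ ^ j := by
  rcases j with _ | j
  · simp
  -- `2σ + L = σ + (σ + L)` and `L = -σ + (σ + L)`, both sums of two factors with product zero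
  have hσ' : -σ * (σ + L) = 0 := by linear_combination -hσ
  have hc := add_pow_succ_of_mul_eq_zero (show σ * (σ + L) = 0 by linear_combination hσ) j
  have hL := add_pow_succ_of_mul_eq_zero hσ' j
  rw [neg_pow] at hL
  linear_combination hc - hL

theorem sum_range_div_factorial_mul_div_factorial (N : ℕ) (u v : ℕ → ℚ) :
    ∑ j ∈ range N, u j / j ! * (v j / (N - j)!) =
      (∑ j ∈ range N, N.choose j * (u j * v j)) / N ! := by
  rw [sum_div]
  refine sum_congr rfl fun j hj => ?_
  rw [Nat.cast_choose ℚ (mem_range.1 hj).le]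
  field_simp

theorem sum_neg_one_pow_div_factorial_mul_inv_factorial {m : ℕ} (hm : 1 ≤ m) :
    ∑ i ∈ range m, (-1 : ℚ) ^ (m - i) / (m - i)! * (i ! : ℚ)⁻¹ = -1 / m ! := by
  have hbinom : ∑ i ∈ range (m + 1), (-1 : ℚ) ^ (m - i) * m.choose i = 0 := by
    simpa [zero_pow (by omega : m ≠ 0), mul_comm] using (add_pow (1 : ℚ) (-1) m).symm
  rw [sum_range_succ, Nat.sub_self, Nat.choose_self] at hbinom
  calc ∑ i ∈ range m, (-1 : ℚ) ^ (m - i) / (m - i)! * (i ! : ℚ)⁻¹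
      = ∑ i ∈ range m, 1 / i ! * ((-1 : ℚ) ^ (m - i) / (m - i)!) :=
        sum_congr rfl fun _ _ => by ring
    _ = -1 / m ! := by
        rw [sum_range_div_factorial_mul_div_factorial]
        simp only [one_mul, pow_zero, Nat.cast_one, mul_comm ((m.choose _ : ℚ))] at hbinom ⊢
        rw [eq_neg_of_add_eq_zero_left hbinom]

theorem sum_bernoulli_div_factorial_mul {k : ℕ} (hk : 1 ≤ k) (x : ℚ) :
    ∑ j ∈ range (k + 1), (-1 : ℚ) ^ j * bernoulli j / j ! *
        ((x * (-1) ^ (k + 1 - j) - (-1) ^ k) / (k + 1 - j)!) = -(-1) ^ k / k ! := by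
  have hsum : ∀ j ∈ range (k + 1),
      ((k + 1).choose j : ℚ) * ((-1) ^ j * bernoulli j * (x * (-1) ^ (k + 1 - j) - (-1) ^ k)) =
        x * (-1) ^ (k + 1) * ((k + 1).choose j * bernoulli j) -
          (-1) ^ k * ((k + 1).choose j * bernoulli' j) := by
    intro j hj
    have hsign : (-1 : ℚ) ^ j * (-1) ^ (k + 1 - j) = (-1) ^ (k + 1) := by
      rw [← pow_add, Nat.add_sub_cancel' (mem_range.1 hj).le]
    rw [bernoulli'_eq_bernoulli]
    linear_combination ((k + 1).choose j : ℚ) * bernoulli j * x * hsign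
  rw [sum_range_div_factorial_mul_div_factorial, sum_congr rfl hsum, sum_sub_distrib, ← mul_sum,
    ← mul_sum, sum_bernoulli, sum_bernoulli', if_neg (by omega), Nat.factorial_succ]
  push_cast
  field_simp
  ring

theorem bernoulli_succ_mul_one_add_neg_one_pow {k : ℕ} (hk : 1 ≤ k) :
    bernoulli (k + 1) * (1 + (-1) ^ k) = 0 := by
  rcases Nat.even_or_odd k with hk' | hk'
  · rw [bernoulli_eq_zero_of_odd hk'.add_one (by omega), zero_mul]
  · rw [hk'.neg_one_pow, add_neg_cancel, mul_zero]

section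

variable {R : Type*} [CommRing R] [Algebra ℚ R] {σ : R}

theorem sum_smul_mul_pow_sub {t : ℕ → R} {n : ℕ} (ht0 : t 0 = n)
    (ht : ∀ j, 1 ≤ j → σ * t j = 0) {m : ℕ} (hm : 1 ≤ m) (a : ℕ → ℚ) :
    ∑ j ∈ range (m + 1), a (m - j) • (t j * σ ^ (m - j)) =
      a 0 • t m + (a m * n) • σ ^ m := by
  rw [sum_range_succ, Nat.sub_self, pow_zero, mul_one, add_comm,
    sum_eq_single_of_mem 0 (mem_range.2 hm), Nat.sub_zero, ht0, mul_smul, ← nsmul_eq_mul,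
    Nat.cast_smul_eq_nsmul]
  intro j hj hj0
  obtain ⟨r, hr⟩ : ∃ r, m - j = r + 1 := ⟨m - j - 1, by have := mem_range.1 hj; omega⟩
  rw [hr, pow_succ', ← mul_assoc, mul_comm (t j), ht j (by omega), zero_mul, smul_zero]

theorem sum_smul_pow_mul_pow_sub {c : R} (hσc : σ * c = σ * σ) (m : ℕ) (b : ℕ → ℚ) :
    ∑ j ∈ range (m + 1), b j • (c ^ j * σ ^ (m - j)) =
      b m • c ^ m + (∑ j ∈ range m, b j) • σ ^ m := by
  rw [sum_range_succ, Nat.sub_self, pow_zero, mul_one, sum_smul, add_comm]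
  congr 1
  refine sum_congr rfl fun j hj => ?_
  obtain ⟨r, hr⟩ : ∃ r, m - j = r + 1 := ⟨m - j - 1, by have := mem_range.1 hj; omega⟩
  have hm : m = r + 1 + j := by have := mem_range.1 hj; omega
  rw [hr, pow_succ', mul_left_comm, ← mul_assoc, mul_pow_eq_mul_pow_of_mul_eq hσc, ← pow_succ',
    ← pow_add]
  congr 2
  omega

theorem sum_smul_sub_smul_pow_mul_pow {c : R} (hσc : σ * c = σ * σ) {t : ℕ → R} {n : ℕ}
    (ht0 : t 0 = n) (ht : ∀ j, 1 ≤ j → σ * t j = 0) {m : ℕ} (hm : 1 ≤ m) :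
    ∑ j ∈ range (m + 1),
        ((-1 : ℚ) ^ (m - j) / (m - j)!) • ((t j - (j ! : ℚ)⁻¹ • c ^ j) * σ ^ (m - j)) =
      t m - (m ! : ℚ)⁻¹ • c ^ m + (((n : ℚ) * (-1) ^ m + 1) / m !) • σ ^ m := by
  have hsplit : ∀ j ∈ range (m + 1),
      ((-1 : ℚ) ^ (m - j) / (m - j)!) • ((t j - (j ! : ℚ)⁻¹ • c ^ j) * σ ^ (m - j)) =
        (fun r : ℕ => (-1 : ℚ) ^ r / r !) (m - j) • (t j * σ ^ (m - j)) -
          ((-1 : ℚ) ^ (m - j) / (m - j)! * (j ! : ℚ)⁻¹) • (c ^ j * σ ^ (m - j)) := by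
    intro j _
    rw [sub_mul, smul_sub, smul_mul_assoc, smul_smul]
  rw [sum_congr rfl hsplit, sum_sub_distrib,
    sum_smul_mul_pow_sub ht0 ht hm fun r => (-1 : ℚ) ^ r / r !,
    sum_smul_pow_mul_pow_sub hσc, sum_neg_one_pow_div_factorial_mul_inv_factorial hm]
  simp only [pow_zero, Nat.factorial_zero, Nat.cast_one, div_one, one_smul, Nat.sub_self, one_mul]
  module

end

section Projection

variable {R S : Type*} [CommRing R] [CommRing S] {π : S →+* R} {p : R →+ S} {σ : R} {ℓ : S}

theorem map_pow_succ_of_sq_eq (hσ : σ ^ 2 = -(σ * π ℓ))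
    (hproj : ∀ (a : S) (x : R), p (π a * x) = a * p x) (hpσ : p σ = 1) (m : ℕ) :
    p (σ ^ (m + 1)) = (-ℓ) ^ m := by
  have hσσ : σ * σ = σ * π (-ℓ) := by rw [map_neg]; linear_combination hσ
  rw [pow_succ', mul_pow_eq_mul_pow_of_mul_eq hσσ, mul_comm, ← map_pow, hproj, hpσ, mul_one]

theorem map_two_mul_add_pow_succ [Algebra ℚ S] (hσ : σ ^ 2 = -(σ * π ℓ))
    (hproj : ∀ (a : S) (x : R), p (π a * x) = a * p x) (hpπ : ∀ a : S, p (π a) = 0)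
    (hpσ : p σ = 1) (j : ℕ) :
    p ((2 * σ + π ℓ) ^ (j + 1)) = (1 + (-1) ^ j : ℚ) • (-ℓ) ^ j := by
  have hcoef : (1 - (-1) ^ (j + 1) : R) = π (1 + (-1) ^ j) := by simp [pow_succ]
  rw [two_mul_add_pow_of_sq_eq hσ, hcoef, ← map_pow, map_add, hpπ, zero_add, hproj,
    map_pow_succ_of_sq_eq hσ hproj hpσ, Algebra.smul_def]
  simp

theorem map_sub_add_smul_mul_two_mul_add_pow [Algebra ℚ R] [Algebra ℚ S]
    (hσ : σ ^ 2 = -(σ * π ℓ)) (hproj : ∀ (a : S) (x : R), p (π a * x) = a * p x)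
    (hpπ : ∀ a : S, p (π a) = 0) (hpσ : p σ = 1) {x : R} (hx : σ * x = 0) (a : ℚ)
    {m j k : ℕ} (hm : 1 ≤ m) (hmjk : m + j = k + 1) :
    p ((x - (m ! : ℚ)⁻¹ • (2 * σ + π ℓ) ^ m + ((a * (-1) ^ m + 1) / m !) • σ ^ m) *
        (2 * σ + π ℓ) ^ j) =
      ℓ ^ j * p x + ((a * (-1) ^ m - (-1) ^ k) / m !) • (-ℓ) ^ k := by
  have hxc : x * (2 * σ + π ℓ) ^ j = π (ℓ ^ j) * x := by
    have hxc' : x * (2 * σ + π ℓ) = x * π ℓ := by linear_combination 2 * hx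
    rw [mul_pow_eq_mul_pow_of_mul_eq hxc', map_pow, mul_comm]
  have hσc : σ ^ m * (2 * σ + π ℓ) ^ j = σ ^ (k + 1) := by
    have hσc' : σ * (2 * σ + π ℓ) = σ * σ := by linear_combination hσ
    obtain ⟨r, rfl⟩ : ∃ r, m = r + 1 := ⟨m - 1, by omega⟩
    rw [pow_succ, mul_assoc, mul_pow_eq_mul_pow_of_mul_eq hσc', ← mul_assoc, ← pow_succ,
      ← pow_add, hmjk]
  rw [add_mul, sub_mul, smul_mul_assoc, smul_mul_assoc, hxc, ← pow_add, hmjk, hσc, map_add,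
    map_sub, map_rat_smul, map_rat_smul, hproj, map_two_mul_add_pow_succ hσ hproj hpπ hpσ,
    map_pow_succ_of_sq_eq hσ hproj hpσ]
  module

end Projection

/-- Algebraic core of Proposition 1.1:
`p (W (k+1)) = ∑_{j=0}^{k} ((-1)^j B_j / j!) ℓ^j p (t (k+1-j)) - (1/k!) ℓ^k`. -/
theorem stmt_0 {R S : Type*} [CommRing R] [Algebra ℚ R] [CommRing S] [Algebra ℚ S]
    (σ L : R) (hσ : σ ^ 2 = -(σ * L))
    (n : ℕ) (t : ℕ → R) (ht0 : t 0 = (n : R)) (ht : ∀ j, 1 ≤ j → σ * t j = 0)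
    (π : S →+* R) (ℓ : S) (hL : L = π ℓ)
    (p : R →+ S)
    (hproj : ∀ (a : S) (x : R), p (π a * x) = a * p x)
    (hpπ : ∀ a : S, p (π a) = 0) (hpσ : p σ = 1)
    (c : R) (hc : c = 2 * σ + L)
    (Z : ℕ → R)
    (hZ : ∀ k : ℕ, Z k = ∑ j ∈ Finset.range (k + 1),
      (((-1 : ℚ) ^ (k - j) / (k - j).factorial) •
        ((t j - ((j.factorial : ℚ)⁻¹ • c ^ j)) * σ ^ (k - j))))
    (W : ℕ → R)
    (hW : ∀ m : ℕ, W m = ∑ j ∈ Finset.range (m + 1),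
      (((-1 : ℚ) ^ j * bernoulli j / j.factorial) • (Z (m - j) * c ^ j)))
    (k : ℕ) (hk : 1 ≤ k) :
    p (W (k + 1)) =
      (∑ j ∈ Finset.range (k + 1),
        ((-1 : ℚ) ^ j * bernoulli j / j.factorial) • (ℓ ^ j * p (t (k + 1 - j))))
      - ((k.factorial : ℚ)⁻¹ • ℓ ^ k) := by
  subst hL hc
  have hσc : σ * (2 * σ + π ℓ) = σ * σ := by linear_combination hσ
  have hterm : ∀ j ∈ range (k + 1),
      p (((-1 : ℚ) ^ j * bernoulli j / j !) • (Z (k + 1 - j) * (2 * σ + π ℓ) ^ j)) =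
        ((-1 : ℚ) ^ j * bernoulli j / j !) • (ℓ ^ j * p (t (k + 1 - j))) +
          ((-1 : ℚ) ^ j * bernoulli j / j ! *
            ((n * (-1) ^ (k + 1 - j) - (-1) ^ k) / (k + 1 - j)!)) • (-ℓ) ^ k := by
    intro j hj
    have hm : 1 ≤ k + 1 - j := by have := mem_range.1 hj; omega
    rw [map_rat_smul, hZ, sum_smul_sub_smul_pow_mul_pow hσc ht0 ht hm,
      map_sub_add_smul_mul_two_mul_add_pow hσ hproj hpπ hpσ (ht _ hm) _ hm (k := k) (by omega),
      smul_add, smul_smul]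
  have hlast : p (((-1 : ℚ) ^ (k + 1) * bernoulli (k + 1) / (k + 1)!) •
      (Z 0 * (2 * σ + π ℓ) ^ (k + 1))) = 0 := by
    have hZ0 : Z 0 = π (n - 1) := by simp [hZ, ht0]
    rw [map_rat_smul, hZ0, hproj, map_two_mul_add_pow_succ hσ hproj hpπ hpσ, mul_smul_comm,
      smul_smul, mul_div_right_comm, mul_assoc, bernoulli_succ_mul_one_add_neg_one_pow hk]
    simp
  rw [hW, sum_range_succ, Nat.sub_self, map_add, map_sum, hlast, add_zero, sum_congr rfl hterm,
    sum_add_distrib, ← sum_smul, sum_bernoulli_div_factorial_mul hk, neg_div, neg_smul,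
    div_eq_inv_mul, mul_smul, ← smul_pow, neg_smul, one_smul, neg_neg, sub_eq_add_neg]
end

section
/- One has $p(W_2) = p(t_2) + \frac{d}{2}\,\ell$ in $S$. (This is the algebraic core of formula (1.2) of Proposition 1.1: $c_1(H_x) = {\pi_x}_*\mathrm{ev}_x^*(\mathrm{ch}_2(X)) + \frac{d}{2} c_1(L_x)$.) -/
/-- Algebraic core of formula (1.2) of Proposition 1.1:
`c₁(H_x) = π_* ev^* ch₂(X) + (d/2) c₁(L_x)`, i.e. `p (W 2) = p (t 2) + (d/2) ℓ`. -/
theorem stmt_1 {R S : Type*} [CommRing R] [Algebra ℚ R] [CommRing S] [Algebra ℚ S]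
    (σ L : R) (hσ : σ ^ 2 = -(σ * L))
    (n : ℕ) (t : ℕ → R) (ht0 : t 0 = (n : R)) (ht : ∀ j, 1 ≤ j → σ * t j = 0)
    (π : S →+* R) (ℓ : S) (hL : L = π ℓ)
    (p : R →+ S)
    (hproj : ∀ (a : S) (x : R), p (π a * x) = a * p x)
    (hpπ : ∀ a : S, p (π a) = 0) (hpσ : p σ = 1)
    (c : R) (hc : c = 2 * σ + L)
    (Z : ℕ → R)
    (hZ : ∀ k : ℕ, Z k = ∑ j ∈ Finset.range (k + 1),
      (((-1 : ℚ) ^ (k - j) / (k - j).factorial) •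
        ((t j - ((j.factorial : ℚ)⁻¹ • c ^ j)) * σ ^ (k - j))))
    (W : ℕ → R)
    (hW : ∀ m : ℕ, W m = ∑ j ∈ Finset.range (m + 1),
      (((-1 : ℚ) ^ j * bernoulli j / j.factorial) • (Z (m - j) * c ^ j)))
    (d : ℤ) (hd : p (t 1) = ((d : ℚ) + 2) • (1 : S)) :
    p (W 2) = p (t 2) + ((d : ℚ) / 2) • ℓ := by
  subst hL
  -- basic pushforward computations
  have hσσ : σ * σ = -(σ * π ℓ) := by rw [← sq]; exact hσ
  have hpσL : p (σ * π ℓ) = ℓ := by rw [mul_comm, hproj, hpσ, mul_one]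
  have hpσσ : p (σ * σ) = -ℓ := by rw [hσσ, map_neg, hpσL]
  have hpσ2 : p (σ ^ 2) = -ℓ := by rw [sq, hpσσ]
  have hn : ((n : R) - 1) = π ((n : S) - 1) := by
    rw [map_sub, map_one, map_natCast]
  have hc2 : c ^ 2 = π (ℓ * ℓ) := by
    rw [hc, map_mul]; linear_combination (4 : R) * hσ
  have hpc2 : p (c ^ 2) = 0 := by rw [hc2, hpπ]
  have hpcσ : p (c * σ) = -ℓ := by
    have h : c * σ = σ * σ + σ * σ + π ℓ * σ := by rw [hc]; ring
    rw [h, map_add, map_add, hpσσ, hproj, hpσ, mul_one]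
    ring
  have hpB : p ((t 1 - c) * σ) = ℓ := by
    have h : (t 1 - c) * σ = σ * t 1 - c * σ := by ring
    rw [h, map_sub, ht 1 le_rfl, hpcσ, map_zero]
    ring
  have hcast : ((n : S)) * ℓ = (n : ℚ) • ℓ := by
    rw [Algebra.smul_def, map_natCast]
  have hpA : p (((n : R) - 1) * σ ^ 2) = ℓ - (n : ℚ) • ℓ := by
    rw [hn, hproj, hpσ2, ← hcast]; ring
  have hpt1c : p (t 1 * c) = ((d : ℚ) + 2) • ℓ := by
    have h : t 1 * c = σ * t 1 + σ * t 1 + π ℓ * t 1 := by rw [hc]; ring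
    rw [h, map_add, map_add, ht 1 le_rfl, hproj, hd, map_zero,
      mul_smul_comm, mul_one]
    ring
  have hpD : p ((-(((n : R) - 1) * σ) + (t 1 - c)) * c) =
      ((n : ℚ) • ℓ - ℓ) + ((d : ℚ) + 2) • ℓ := by
    have h : (-(((n : R) - 1) * σ) + (t 1 - c)) * c =
        t 1 * c - ((n : R) - 1) * (c * σ) - c ^ 2 := by ring
    rw [h, map_sub, map_sub, hpt1c, hn, hproj, hpcσ, hpc2, ← hcast]
    ring
  have hpE : p (((n : R) - 1) * c ^ 2) = 0 := by
    rw [hn, hproj, hpc2, mul_zero]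
  rw [hW]
  simp only [Finset.sum_range_succ, Finset.sum_range_zero, hZ, ht0]
  norm_num [Nat.factorial, bernoulli, bernoulli'_two, bernoulli'_one, bernoulli'_zero]
  rw [map_rat_smul, map_rat_smul, map_rat_smul, map_rat_smul, hpA, hpB, hpc2, hpD, hpE]
  module
end

section
/- One has $p(W_3) = p(t_3) + \frac{1}{2}\, p(t_2)\,\ell + \frac{d-4}{12}\,\ell^2$ in $S$. (This is the algebraic core of formula (1.3) of Proposition 1.1: $\mathrm{ch}_2(H_x) = {\pi_x}_*\mathrm{ev}_x^*(\mathrm{ch}_3(X)) + \frac{1}{2}{\pi_x}_*\mathrm{ev}_x^*(\mathrm{ch}_2(X)) \cdot c_1(L_x) + \frac{d-4}{12} c_1(L_x)^2$.) -/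
/-- Algebraic core of formula (1.3) of Proposition 1.1:
`ch₂(H_x) = π_* ev^* ch₃(X) + (1/2) π_* ev^* ch₂(X) · c₁(L_x) + ((d-4)/12) c₁(L_x)²`,
i.e. `p (W 3) = p (t 3) + (1/2) p (t 2) ℓ + ((d-4)/12) ℓ²`. -/
theorem stmt_2 {R S : Type*} [CommRing R] [Algebra ℚ R] [CommRing S] [Algebra ℚ S]
    (σ L : R) (hσ : σ ^ 2 = -(σ * L))
    (n : ℕ) (t : ℕ → R) (ht0 : t 0 = (n : R)) (ht : ∀ j, 1 ≤ j → σ * t j = 0)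
    (π : S →+* R) (ℓ : S) (hL : L = π ℓ)
    (p : R →+ S)
    (hproj : ∀ (a : S) (x : R), p (π a * x) = a * p x)
    (hpπ : ∀ a : S, p (π a) = 0) (hpσ : p σ = 1)
    (c : R) (hc : c = 2 * σ + L)
    (Z : ℕ → R)
    (hZ : ∀ k : ℕ, Z k = ∑ j ∈ Finset.range (k + 1),
      (((-1 : ℚ) ^ (k - j) / (k - j).factorial) •
        ((t j - ((j.factorial : ℚ)⁻¹ • c ^ j)) * σ ^ (k - j))))
    (W : ℕ → R)
    (hW : ∀ m : ℕ, W m = ∑ j ∈ Finset.range (m + 1),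
      (((-1 : ℚ) ^ j * bernoulli j / j.factorial) • (Z (m - j) * c ^ j)))
    (d : ℤ) (hd : p (t 1) = ((d : ℚ) + 2) • (1 : S)) :
    p (W 3) = p (t 3) + (1 / 2 : ℚ) • (p (t 2) * ℓ) + (((d : ℚ) - 4) / 12) • ℓ ^ 2 := by
  have e1 := ht 1 le_rfl
  have e2 := ht 2 (by norm_num)
  have e3 := ht 3 (by norm_num)
  have hσ' : σ ^ 2 + σ * L = 0 := by rw [hσ]; ring
  have hb2 : bernoulli 2 = 1/6 := by norm_num [bernoulli, bernoulli'_two]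
  have hb3 : bernoulli 3 = 0 := by norm_num [bernoulli, bernoulli'_three]
  -- expansion of W and Z
  have hW3 : W 3 = Z 3 + (1/2 : ℚ) • (Z 2 * c) + (1/12 : ℚ) • (Z 1 * c^2) := by
    rw [hW]
    simp only [Finset.sum_range_succ, Finset.sum_range_zero, hb2, hb3, bernoulli_one,
      bernoulli_zero]
    norm_num
  have hZ1 : Z 1 = (t 1 - c) - (t 0 - 1) * σ := by
    rw [hZ]
    simp only [Finset.sum_range_succ, Finset.sum_range_zero]
    norm_num
    ring
  have hZ2 : Z 2 = (t 2 - (1/2 : ℚ) • c^2) - (t 1 - c) * σ + (1/2 : ℚ) • ((t 0 - 1) * σ^2) := by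
    rw [hZ]
    simp only [Finset.sum_range_succ, Finset.sum_range_zero]
    norm_num
    module
  have hZ3 : Z 3 = (t 3 - (1/6 : ℚ) • c^3) - (t 2 - (1/2 : ℚ) • c^2) * σ
      + (1/2 : ℚ) • ((t 1 - c) * σ^2) - (1/6 : ℚ) • ((t 0 - 1) * σ^3) := by
    rw [hZ]
    simp only [Finset.sum_range_succ, Finset.sum_range_zero]
    norm_num [Nat.factorial]
    module
  -- smul-free ring reductions
  have hc3x : c^3 = (σ*L^2 + σ*L^2 + L^3) := by
    rw [hc]; linear_combination (8*σ + 4*L) * hσ'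
  have hc2σ : c^2*σ = σ*L^2 := by
    rw [hc]; linear_combination 4*σ*hσ'
  have ht2σ : t 2 * σ = 0 := by rw [mul_comm]; exact e2
  have hC2 : (t 1 - c) * σ^2 = -(σ*L^2) := by
    rw [hc]; linear_combination (-2*σ + L) * hσ' + σ * e1
  have hC3 : (t 0 - 1) * σ^3 = t 0 * (σ*L^2) - σ*L^2 := by
    linear_combination (σ*t 0 - σ - L*t 0 + L) * hσ'
  have hB1 : t 2 * c - (t 1 - c)*σ*c = t 2 * L + σ*L^2 := by
    rw [hc]; linear_combination 4*σ*hσ' + (-2*σ - L) * e1 + 2 * e2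
  have hB2 : (t 0 - 1)*σ^2*c = t 0 * (σ*L^2) - σ*L^2 := by
    rw [hc]; linear_combination (2*σ*t 0 - L*t 0 - 2*σ + L) * hσ'
  have hA : Z 1 * c^2 = t 1 * L^2 - (σ*L^2) - (σ*L^2) - L^3 - t 0 * (σ*L^2) + σ*L^2 := by
    rw [hZ1, hc]
    linear_combination (-4*σ - 4*L - 4*σ*t 0) * hσ' + (4*σ + 4*L) * e1
  -- reduced forms of Z 3 and Z 2 * c
  have hZ3R : Z 3 = (t 3 - (1/6 : ℚ) • (σ*L^2 + σ*L^2 + L^3)) - (0 - (1/2 : ℚ) • (σ*L^2))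
      + (1/2 : ℚ) • (-(σ*L^2)) - (1/6 : ℚ) • (t 0 * (σ*L^2) - σ*L^2) := by
    calc Z 3 = (t 3 - (1/6 : ℚ) • c^3) - (t 2 * σ - (1/2 : ℚ) • (c^2*σ))
        + (1/2 : ℚ) • ((t 1 - c) * σ^2) - (1/6 : ℚ) • ((t 0 - 1) * σ^3) := by
          rw [hZ3]
          simp only [sub_mul, smul_mul_assoc]
      _ = _ := by rw [hc3x, hc2σ, ht2σ, hC2, hC3]
  have hBR : Z 2 * c = (t 2 * L + σ*L^2) - (1/2 : ℚ) • (σ*L^2 + σ*L^2 + L^3)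
      + (1/2 : ℚ) • (t 0 * (σ*L^2) - σ*L^2) := by
    calc Z 2 * c = (t 2 * c - (t 1 - c)*σ*c) - (1/2 : ℚ) • (c^2*c)
        + (1/2 : ℚ) • ((t 0 - 1)*σ^2*c) := by
          rw [hZ2]
          simp only [sub_mul, add_mul, smul_mul_assoc]
          abel
      _ = _ := by rw [show c^2*c = c^3 by ring, hc3x, hB1, hB2]
  -- p is ℚ-linear
  have hq : ∀ (q : ℚ) (x : R), p (q • x) = q • p x := by
    intro q x
    have key : (algebraMap ℚ R) = π.comp (algebraMap ℚ S) := Subsingleton.elim _ _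
    calc p (q • x) = p (π (algebraMap ℚ S q) * x) := by
          rw [Algebra.smul_def, key]; rfl
      _ = algebraMap ℚ S q * p x := hproj _ _
      _ = q • p x := (Algebra.smul_def q (p x)).symm
  -- values of p
  have pσL2 : p (σ*L^2) = ℓ^2 := by
    rw [show σ*L^2 = π (ℓ^2) * σ by rw [hL, map_pow]; ring, hproj, hpσ, mul_one]
  have pL3 : p (L^3) = 0 := by
    rw [hL, ← map_pow]; exact hpπ _
  have pt0 : p (t 0 * (σ*L^2)) = (n : S) * ℓ^2 := by
    rw [show t 0 * (σ*L^2) = π ((n : S) * ℓ^2) * σ by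
        rw [ht0, hL, map_mul, map_natCast, map_pow]; ring, hproj, hpσ, mul_one]
  have pt2L : p (t 2 * L) = p (t 2) * ℓ := by
    rw [show t 2 * L = π ℓ * t 2 by rw [hL]; ring, hproj, mul_comm]
  have pt1L2 : p (t 1 * L^2) = ((d : ℚ) + 2) • ℓ^2 := by
    rw [show t 1 * L^2 = π (ℓ^2) * t 1 by rw [hL, map_pow]; ring, hproj, hd,
      mul_smul_comm, mul_one]
  have pt3 : p (t 3) = p (t 3) := rfl
  -- put everything together
  rw [hW3, map_add, map_add, hq, hq, hZ3R, hBR, hA]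
  simp only [map_add, map_sub, map_neg, map_zero, hq, pσL2, pL3, pt0, pt2L, pt1L2]
  match_scalars <;> ring
end

section
/- For every integer $k \geq 1$ one has $Z_k = t_k + \frac{(n+1)(-1)^k}{k!}\,\sigma^k - \frac{1}{k!}\, L^k$ in $R$. (This is formula (3.2) of Claim 3.1 in the proof of Proposition 1.1.) -/
/-!
The `c`-part of `Z_k` is, by the binomial theorem, the degree-`k` part of `e^c e^{-σ} = e^{σ + L}`,
and `(σ + L) σ = 0` collapses `L^k = ((σ + L) - σ)^k` to `(σ + L)^k + (-σ)^k`. In the `t`-part,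
`σ t_j = 0` for `j ≥ 1` kills every term except `j = k` and `j = 0`.
-/

open Finset
open scoped Nat

theorem add_pow_of_mul_eq_zero {R : Type*} [CommSemiring R] {a b : R} (hab : a * b = 0)
    {k : ℕ} (hk : 1 ≤ k) : (a + b) ^ k = a ^ k + b ^ k := by
  induction k, hk using Nat.le_induction with
  | base => simp
  | succ k hk ih =>
    obtain ⟨m, rfl⟩ := Nat.exists_eq_add_of_le' hk
    have hba : b * a = 0 := by rw [mul_comm, hab]
    calc (a + b) ^ (m + 1 + 1) = (a ^ (m + 1) + b ^ (m + 1)) * (a + b) := by rw [pow_succ, ih]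
      _ = a ^ (m + 2) + b ^ (m + 2) + a ^ m * (a * b) + b ^ m * (b * a) := by ring
      _ = a ^ (m + 1 + 1) + b ^ (m + 1 + 1) := by rw [hab, hba]; simp

theorem sum_inv_factorial_smul_pow_mul_pow {R : Type*} [CommRing R] [Algebra ℚ R]
    (x y : R) (k : ℕ) :
    ∑ j ∈ range (k + 1), ((j ! : ℚ)⁻¹ * ((k - j)! : ℚ)⁻¹) • (x ^ j * y ^ (k - j))
      = (k ! : ℚ)⁻¹ • (x + y) ^ k := by
  rw [add_pow, smul_sum]
  refine sum_congr rfl fun j hj => ?_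
  have hjk : j ≤ k := Nat.lt_succ_iff.mp (mem_range.mp hj)
  rw [mul_comm _ (k.choose j : R), ← nsmul_eq_mul, ← Nat.cast_smul_eq_nsmul ℚ, smul_smul,
    Nat.cast_choose ℚ hjk]
  congr 1
  field_simp

theorem mul_pow_eq_zero_of_mul_eq_zero {R : Type*} [CommMonoidWithZero R] {s t : R}
    (h : s * t = 0) {m : ℕ} (hm : m ≠ 0) : t * s ^ m = 0 := by
  obtain ⟨m, rfl⟩ := Nat.exists_eq_add_one_of_ne_zero hm
  rw [pow_succ', ← mul_assoc, mul_comm t, h, zero_mul]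

theorem sum_smul_mul_pow_of_mul_eq_zero {S R : Type*} [Semiring S] [CommSemiring R] [Module S R]
    (s : R) (t : ℕ → R) (ht : ∀ j, 1 ≤ j → s * t j = 0) (a : ℕ → S) {k : ℕ} (hk : 1 ≤ k) :
    ∑ j ∈ range (k + 1), a (k - j) • (t j * s ^ (k - j)) = a 0 • t k + a k • (t 0 * s ^ k) := by
  obtain ⟨m, rfl⟩ := Nat.exists_eq_add_of_le' hk
  have hmiddle : ∑ i ∈ range m, a (m + 1 - (i + 1)) • (t (i + 1) * s ^ (m + 1 - (i + 1))) = 0 :=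
    sum_eq_zero fun i hi => by
      rw [mul_pow_eq_zero_of_mul_eq_zero (ht _ (by omega)) (by simp at hi; omega), smul_zero]
  rw [sum_range_succ, sum_range_succ', hmiddle]
  simp [add_comm]

theorem neg_pow_eq_smul {R : Type*} [Ring R] [Algebra ℚ R] (x : R) (m : ℕ) :
    (-x) ^ m = ((-1 : ℚ) ^ m) • x ^ m := by
  rw [neg_pow, Algebra.smul_def]; simp

/-- Formula (3.2) of Claim 3.1:
`Z_k = t_k + ((n+1)(-1)^k / k!) σ^k - (1/k!) L^k` for `k ≥ 1`. -/
theorem stmt_3 {R : Type*} [CommRing R] [Algebra ℚ R]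
    (σ L : R) (hσ : σ ^ 2 = -(σ * L))
    (n : ℕ) (t : ℕ → R) (ht0 : t 0 = (n : R)) (ht : ∀ j, 1 ≤ j → σ * t j = 0)
    (c : R) (hc : c = 2 * σ + L)
    (Z : ℕ → R)
    (hZ : ∀ k : ℕ, Z k = ∑ j ∈ Finset.range (k + 1),
      (((-1 : ℚ) ^ (k - j) / (k - j).factorial) •
        ((t j - ((j.factorial : ℚ)⁻¹ • c ^ j)) * σ ^ (k - j))))
    (k : ℕ) (hk : 1 ≤ k) :
    Z k = t k + ((((n : ℚ) + 1) * (-1) ^ k / k.factorial) • σ ^ k)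
      - ((k.factorial : ℚ)⁻¹ • L ^ k) := by
  have hterm : ∀ j ∈ range (k + 1),
      (((-1 : ℚ) ^ (k - j) / (k - j).factorial) •
        ((t j - ((j.factorial : ℚ)⁻¹ • c ^ j)) * σ ^ (k - j)))
      = ((-1 : ℚ) ^ (k - j) / (k - j)!) • (t j * σ ^ (k - j))
        - ((j ! : ℚ)⁻¹ * ((k - j)! : ℚ)⁻¹) • (c ^ j * (-σ) ^ (k - j)) := fun j _ => by
    rw [neg_pow_eq_smul σ, mul_smul_comm, sub_mul, smul_mul_assoc]
    module
  have ht_part : ∑ j ∈ range (k + 1), ((-1 : ℚ) ^ (k - j) / (k - j)!) • (t j * σ ^ (k - j))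
      = t k + ((-1 : ℚ) ^ k / k !) • (n : ℚ) • σ ^ k := by
    rw [sum_smul_mul_pow_of_mul_eq_zero σ t ht (fun m => (-1 : ℚ) ^ m / m !) hk, ht0,
      ← nsmul_eq_mul, ← Nat.cast_smul_eq_nsmul ℚ]
    simp
  have hc_part : ∑ j ∈ range (k + 1), ((j ! : ℚ)⁻¹ * ((k - j)! : ℚ)⁻¹) • (c ^ j * (-σ) ^ (k - j))
      = (k ! : ℚ)⁻¹ • (L ^ k - (-σ) ^ k) := by
    have hL : L ^ k = (σ + L) ^ k + (-σ) ^ k := by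
      rw [← add_pow_of_mul_eq_zero (by linear_combination -hσ) hk]
      ring
    rw [sum_inv_factorial_smul_pow_mul_pow, hL, add_sub_cancel_right, hc]
    congr 2
    ring
  rw [hZ k, sum_congr rfl hterm, sum_sub_distrib, ht_part, hc_part, neg_pow_eq_smul σ]
  match_scalars <;> ring
end

section
/- For every integer $k \geq 1$ one has $Z_k \cdot \sigma = \frac{(n+1)(-1)^k}{k!}\,\sigma^{k+1} - \frac{1}{k!}\,\sigma L^k$ in $R$. (This is formula (3.3) of Claim 3.1 in the proof of Proposition 1.1.) -/
/-- Formula (3.3) of Claim 3.1: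
`Z_k · σ = ((n+1)(-1)^k / k!) σ^(k+1) - (1/k!) σ L^k` for `k ≥ 1`. -/
theorem stmt_4 {R : Type*} [CommRing R] [Algebra ℚ R]
    (σ L : R) (hσ : σ ^ 2 = -(σ * L))
    (n : ℕ) (t : ℕ → R) (ht0 : t 0 = (n : R)) (ht : ∀ j, 1 ≤ j → σ * t j = 0)
    (c : R) (hc : c = 2 * σ + L)
    (Z : ℕ → R)
    (hZ : ∀ k : ℕ, Z k = ∑ j ∈ Finset.range (k + 1),
      (((-1 : ℚ) ^ (k - j) / (k - j).factorial) •
        ((t j - ((j.factorial : ℚ)⁻¹ • c ^ j)) * σ ^ (k - j))))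
    (k : ℕ) (hk : 1 ≤ k) :
    Z k * σ = ((((n : ℚ) + 1) * (-1) ^ k / k.factorial) • σ ^ (k + 1))
      - ((k.factorial : ℚ)⁻¹ • (σ * L ^ k)) := by
  subst hc
  -- σ * (2σ+L)^j = σ^(j+1)
  have hσc : ∀ j : ℕ, σ * (2 * σ + L) ^ j = σ ^ (j + 1) := by
    intro j
    induction j with
    | zero => simp
    | succ m ih =>
      have h1 : σ * (2 * σ + L) ^ (m + 1) = (σ * (2 * σ + L) ^ m) * (2 * σ + L) := by
        ring
      rw [h1, ih]
      linear_combination σ ^ m * hσ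
  -- σ * L^m = (-1)^m • σ^(m+1)
  have hσLk : ∀ m : ℕ, σ * L ^ m = ((-1 : ℚ) ^ m) • σ ^ (m + 1) := by
    intro m
    induction m with
    | zero => simp
    | succ m ih =>
      have h1 : σ * L ^ (m + 1) = (σ * L ^ m) * L := by ring
      rw [h1, ih, smul_mul_assoc]
      have h2 : σ ^ (m + 1) * L = -(σ ^ (m + 2)) := by linear_combination σ ^ m * hσ
      rw [h2, smul_neg, ← neg_smul]
      congr 1
      ring
  -- each summand
  have key : ∀ j ∈ Finset.range (k + 1),
      ((((-1 : ℚ) ^ (k - j) / (k - j).factorial) •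
        ((t j - ((j.factorial : ℚ)⁻¹ • (2 * σ + L) ^ j)) * σ ^ (k - j)))) * σ
      = (if j = 0 then (((n : ℚ) * (-1) ^ k / k.factorial) • σ ^ (k + 1)) else 0)
        - ((-1 : ℚ) ^ (k - j) / ((k - j).factorial * j.factorial)) • σ ^ (k + 1) := by
    intro j hj
    have hjk : j ≤ k := Nat.lt_succ_iff.mp (Finset.mem_range.mp hj)
    have hcj : (2 * σ + L) ^ j * σ ^ (k - j) * σ = σ ^ (k + 1) := by
      calc (2 * σ + L) ^ j * σ ^ (k - j) * σ
          = (σ * (2 * σ + L) ^ j) * σ ^ (k - j) := by ring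
        _ = σ ^ (j + 1) * σ ^ (k - j) := by rw [hσc j]
        _ = σ ^ (k + 1) := by rw [← pow_add]; congr 1; omega
    have hx : ((t j - ((j.factorial : ℚ)⁻¹ • (2 * σ + L) ^ j)) * σ ^ (k - j)) * σ
        = t j * σ ^ (k - j) * σ - ((j.factorial : ℚ)⁻¹) • σ ^ (k + 1) := by
      rw [sub_mul, sub_mul, smul_mul_assoc, smul_mul_assoc, hcj]
    rw [smul_mul_assoc, hx]
    rcases Nat.eq_zero_or_pos j with h0 | h1
    · subst h0
      rw [if_pos rfl, ht0]
      have hn : (n : R) * σ ^ (k - 0) * σ = (n : ℚ) • σ ^ (k + 1) := by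
        have : (n : R) * σ ^ (k - 0) * σ = (n : R) * σ ^ (k + 1) := by
          rw [Nat.sub_zero]; ring
        rw [this, Algebra.smul_def, map_natCast]
      rw [hn, smul_sub, smul_smul, smul_smul]
      congr 1
      · congr 1; simp only [Nat.sub_zero]; ring
      · congr 1; simp only [Nat.factorial_zero, Nat.cast_one]; ring
    · have htj : t j * σ ^ (k - j) * σ = 0 := by
        have hz : σ * t j = 0 := ht j h1
        calc t j * σ ^ (k - j) * σ = (σ * t j) * σ ^ (k - j) := by ring
          _ = 0 := by rw [hz, zero_mul]
      rw [if_neg (by omega), htj, zero_sub, smul_neg, smul_smul, ← neg_smul, zero_sub,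
        ← neg_smul]
      congr 1
      ring
  rw [hZ k, Finset.sum_mul, Finset.sum_congr rfl key, Finset.sum_sub_distrib,
    Finset.sum_ite_eq' (Finset.range (k + 1)) 0, if_pos (Finset.mem_range.mpr (by omega)),
    ← Finset.sum_smul]
  -- the rational sum vanishes
  have hsum : (∑ j ∈ Finset.range (k + 1),
      ((-1 : ℚ) ^ (k - j) / ((k - j).factorial * j.factorial))) = 0 := by
    have h1 : ∀ j ∈ Finset.range (k + 1),
        ((-1 : ℚ) ^ (k - j) / ((k - j).factorial * j.factorial))
        = ((-1 : ℚ) ^ k / k.factorial) * ((-1 : ℚ) ^ j * (k.choose j : ℚ)) := by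
      intro j hj
      have hjk : j ≤ k := Nat.lt_succ_iff.mp (Finset.mem_range.mp hj)
      have h := Nat.choose_mul_factorial_mul_factorial hjk
      have h' : ((k.choose j : ℚ)) * (j.factorial : ℚ) * ((k - j).factorial : ℚ)
          = (k.factorial : ℚ) := by exact_mod_cast congrArg (Nat.cast (R := ℚ)) h
      have hp : (-1 : ℚ) ^ (k - j) * (-1 : ℚ) ^ j = (-1 : ℚ) ^ k := by
        rw [← pow_add]; congr 1; omega
      have hj0 : (j.factorial : ℚ) ≠ 0 := Nat.cast_ne_zero.mpr j.factorial_ne_zero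
      have hkj0 : ((k - j).factorial : ℚ) ≠ 0 := Nat.cast_ne_zero.mpr (k - j).factorial_ne_zero
      have hk0 : (k.factorial : ℚ) ≠ 0 := Nat.cast_ne_zero.mpr k.factorial_ne_zero
      have hb2 : (-1 : ℚ) ^ j * (-1 : ℚ) ^ j = 1 := by rw [← mul_pow]; norm_num
      field_simp
      linear_combination ((-1 : ℚ) ^ j * (k.factorial : ℚ)) * hp
        - ((-1 : ℚ) ^ (k - j) * (k.factorial : ℚ)) * hb2
        - ((-1 : ℚ) ^ j * (-1 : ℚ) ^ k) * h'
    rw [Finset.sum_congr rfl h1, ← Finset.mul_sum]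
    have halt : (∑ j ∈ Finset.range (k + 1), ((-1 : ℚ) ^ j * (k.choose j : ℚ))) = 0 := by
      have h := Int.alternating_sum_range_choose (n := k)
      rw [if_neg (by omega)] at h
      have : ((∑ j ∈ Finset.range (k + 1), ((-1 : ℤ) ^ j * (k.choose j : ℤ)) : ℤ) : ℚ)
          = ∑ j ∈ Finset.range (k + 1), ((-1 : ℚ) ^ j * (k.choose j : ℚ)) := by
        push_cast; ring
      rw [← this, h]; norm_num
    rw [halt, mul_zero]
  rw [hsum, zero_smul, sub_zero, hσLk k, smul_smul, ← sub_smul]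
  congr 1
  ring
end

section
/- For every integer $k \geq 1$ one has $p(Z_k) = p(t_k) - \frac{n+1}{k!}\,\ell^{k-1}$ in $S$. (This is formula (3.4) of Claim 3.1 in the proof of Proposition 1.1: ${\pi_x}_* Z_k = {\pi_x}_*\mathrm{ev}_x^*\mathrm{ch}_k(X) - \frac{n+1}{k!} c_1(L_x)^{k-1}$.) -/
/-!
By the binomial theorem the defining sum splits as
`Z k = ∑ j, t j * (-σ)^(k-j) / (k-j)! - (c - σ)^k / k!`.
Since `σ` kills every `t j` with `j ≥ 1`, only `t k` and
`n * (-σ)^k / k!` survive of the first sum.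
The relation `σ² = -σL` gives `(-σ)^k = -σ L^(k-1)` and `(c - σ) * (-σ) = 0`; as
`(c - σ) + (-σ) = L`, the binomial theorem collapses to `(c - σ)^k = L^k - (-σ)^k`.
Pushing forward, `p` kills `L^k` and sends `σ L^(k-1)` to `ℓ^(k-1)`.
-/

open Finset

theorem pow_succ_eq_mul_pow_of_mul_self_eq {M : Type*} [CommMonoid M] {a b : M}
    (h : a * a = a * b) (m : ℕ) : a ^ (m + 1) = a * b ^ m := by
  induction m with
  | zero => simp
  | succ m ih => rw [pow_succ, ih, mul_right_comm, h, mul_assoc, ← pow_succ']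

theorem add_pow_succ_of_mul_eq_zero_s5 {A : Type*} [CommSemiring A] {x y : A}
    (h : x * y = 0) (m : ℕ) : (x + y) ^ (m + 1) = x ^ (m + 1) + y ^ (m + 1) := by
  induction m with
  | zero => simp
  | succ m ih =>
    have hxy : x ^ (m + 1) * y = 0 := by rw [pow_succ, mul_assoc, h, mul_zero]
    have hyx : y ^ (m + 1) * x = 0 := by rw [pow_succ, mul_assoc, mul_comm y, h, mul_zero]
    rw [pow_succ, ih, add_mul, mul_add, mul_add, hxy, hyx, add_zero, zero_add, ← pow_succ,
      ← pow_succ]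

section RationalAlgebra

variable {A : Type*} [CommRing A] [Algebra ℚ A]

theorem inv_factorial_smul_add_pow (x y : A) (k : ℕ) :
    (k.factorial : ℚ)⁻¹ • (x + y) ^ k = ∑ j ∈ range (k + 1),
      ((j.factorial : ℚ)⁻¹ * ((k - j).factorial : ℚ)⁻¹) • (x ^ j * y ^ (k - j)) := by
  rw [add_pow, smul_sum]
  refine sum_congr rfl fun j hj => ?_
  have hjk : j ≤ k := Nat.lt_succ_iff.mp (mem_range.mp hj)
  rw [mul_comm, ← nsmul_eq_mul, ← Nat.cast_smul_eq_nsmul ℚ, smul_smul, Nat.cast_choose ℚ hjk]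
  congr 1
  field_simp

theorem sum_neg_one_pow_div_factorial_smul_sub_mul_pow (t : ℕ → A) (c s : A) (k : ℕ) :
    ∑ j ∈ range (k + 1), (((-1 : ℚ) ^ (k - j) / (k - j).factorial) •
        ((t j - ((j.factorial : ℚ)⁻¹ • c ^ j)) * s ^ (k - j))) =
      ∑ j ∈ range (k + 1), ((k - j).factorial : ℚ)⁻¹ • (t j * (-s) ^ (k - j)) -
        (k.factorial : ℚ)⁻¹ • (c - s) ^ k := by
  rw [sub_eq_add_neg c s, inv_factorial_smul_add_pow, ← sum_sub_distrib]
  refine sum_congr rfl fun j _ => ?_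
  have hneg : (-s) ^ (k - j) = ((-1 : ℚ) ^ (k - j)) • s ^ (k - j) := by
    rw [neg_pow, Algebra.smul_def, map_pow, map_neg, map_one]
  rw [hneg, sub_mul, smul_mul_assoc, mul_smul_comm, mul_smul_comm]
  module

theorem sum_inv_factorial_smul_mul_pow_eq_of_mul_eq_zero (t : ℕ → A) (s : A)
    (ht : ∀ j, 1 ≤ j → s * t j = 0) {k : ℕ} (hk : 1 ≤ k) :
    ∑ j ∈ range (k + 1), ((k - j).factorial : ℚ)⁻¹ • (t j * s ^ (k - j)) =
      t k + (k.factorial : ℚ)⁻¹ • (t 0 * s ^ k) := by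
  obtain ⟨K, rfl⟩ : ∃ K, k = K + 1 := ⟨k - 1, by omega⟩
  have hmid : ∀ j ∈ range K, t (j + 1) * s ^ (K + 1 - (j + 1)) = 0 := fun j hj => by
    have hjK : K - j = (K - j - 1) + 1 := by have := mem_range.mp hj; omega
    rw [Nat.add_sub_add_right, hjK, pow_succ, mul_left_comm, mul_comm (t _), ht _ le_add_self,
      mul_zero]
  rw [sum_range_succ, sum_range_succ', sum_congr rfl fun j hj => by rw [hmid j hj, smul_zero]]
  simp [add_comm]

end RationalAlgebra

/-- Formula (3.4) of Claim 3.1: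
`π_* Z_k = π_* ev^* ch_k(X) - ((n+1)/k!) c₁(L_x)^(k-1)`, i.e.
`p (Z k) = p (t k) - ((n+1)/k!) ℓ^(k-1)` for `k ≥ 1`. -/
theorem stmt_5 {R S : Type*} [CommRing R] [Algebra ℚ R] [CommRing S] [Algebra ℚ S]
    (σ L : R) (hσ : σ ^ 2 = -(σ * L))
    (n : ℕ) (t : ℕ → R) (ht0 : t 0 = (n : R)) (ht : ∀ j, 1 ≤ j → σ * t j = 0)
    (c : R) (hc : c = 2 * σ + L)
    (Z : ℕ → R)
    (hZ : ∀ k : ℕ, Z k = ∑ j ∈ Finset.range (k + 1),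
      (((-1 : ℚ) ^ (k - j) / (k - j).factorial) •
        ((t j - ((j.factorial : ℚ)⁻¹ • c ^ j)) * σ ^ (k - j))))
    (π : S →+* R) (ℓ : S) (hL : L = π ℓ)
    (p : R →+ S)
    (hproj : ∀ (a : S) (x : R), p (π a * x) = a * p x)
    (hpπ : ∀ a : S, p (π a) = 0) (hpσ : p σ = 1)
    (k : ℕ) (hk : 1 ≤ k) :
    p (Z k) = p (t k) - ((((n : ℚ) + 1) / k.factorial) • ℓ ^ (k - 1)) := by
  have hnegσ : -σ * -σ = -σ * L := by rw [neg_mul_neg, ← sq, hσ, neg_mul]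
  have hsum : (c - σ) + -σ = L := by rw [hc]; ring
  have hprod : (c - σ) * -σ = 0 := by rw [hc]; linear_combination -hσ
  obtain ⟨K, rfl⟩ : ∃ K, k = K + 1 := ⟨k - 1, by omega⟩
  have hnegσ_pow : (-σ) ^ (K + 1) = -(π (ℓ ^ K) * σ) := by
    rw [pow_succ_eq_mul_pow_of_mul_self_eq hnegσ, hL, map_pow]; ring
  have hcσ_pow : (c - σ) ^ (K + 1) = π (ℓ ^ (K + 1)) - (-σ) ^ (K + 1) := by
    rw [eq_sub_iff_add_eq, ← add_pow_succ_of_mul_eq_zero_s5 hprod, hsum, hL, map_pow]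
  have hnegσ_t : ∀ j, 1 ≤ j → -σ * t j = 0 := fun j hj => by rw [neg_mul, ht j hj, neg_zero]
  rw [hZ, sum_neg_one_pow_div_factorial_smul_sub_mul_pow,
    sum_inv_factorial_smul_mul_pow_eq_of_mul_eq_zero t (-σ) hnegσ_t hk, hcσ_pow, hnegσ_pow, ht0,
    ← nsmul_eq_mul]
  simp only [map_add, map_sub, map_neg, map_rat_smul, map_nsmul, hproj, hpσ, hpπ, mul_one,
    Nat.add_sub_cancel]
  module
end
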